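/- arXiv:2602.18957 — 2 statements merged into one kernel-verified Lean document; each statement's English description precedes it below -/
import Mathlib

section
/- Let Ω be a finite set with weights w(x) > 0 for x ∈ Ω, and for subsets S ⊆ Ω write w(S) = Σ_{x∈S} w(x). Let m ≥ 1 and let (X_{x,k})_{x∈Ω, 1≤k≤m} be independent random variables with X_{x,k} Exp(w(x))-distributed. For nonempty subsets A, B ⊆ Ω and each position k set A_k = min_{x∈A} X_{x,k} and B_k = min_{x∈B} X_{x,k}. Then: (i) if A ⊆ B, then B_k ≤ A_k for every k surely; (ii) if A is not contained in B, then P(there exists k with B_k > A_k) = 1 − (w(B)/w(A ∪ B))^m, and in particular this probability is strictly positive. -/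
/-!
Part (i) is monotonicity of `Finset.inf'`. For (ii), `A_k < B_k` holds iff the minimum of
column `k` over `A \ B` is below its minimum over `B`. These are minima of independent
exponential variables over disjoint sets, hence independent with laws `Exp(w(A \ B))` and
`Exp(w B)`, so `B` wins with probability `w B / w(A ∪ B)`. The columns are independent, so no
witness appears with probability `(w B / w(A ∪ B))^m`.
-/

open MeasureTheory ProbabilityTheory Set Real

theorem Finset.measurable_inf' {α δ ι : Type*} [MeasurableSpace δ] [MeasurableSpace α]
    [SemilatticeInf α] [MeasurableInf₂ α] {s : Finset ι} (hs : s.Nonempty) {f : ι → δ → α}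
    (hf : ∀ i ∈ s, Measurable (f i)) : Measurable fun x => s.inf' hs (f · x) := by
  simpa only [← Finset.inf'_apply] using
    Finset.inf'_induction hs f (p := Measurable) (fun _ h₁ _ h₂ => h₁.inf h₂) hf

theorem Finset.inf'_attach {α β : Type*} [SemilatticeInf β] {s : Finset α} (hs : s.Nonempty)
    (f : α → β) : s.attach.inf' hs.attach (fun i => f i) = s.inf' hs f :=
  le_antisymm
    (Finset.le_inf' _ _ fun i hi => Finset.inf'_le _ (Finset.mem_attach _ ⟨i, hi⟩))
    (Finset.le_inf' _ _ fun i _ => Finset.inf'_le _ i.2)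

theorem Finset.inf'_lt_inf'_iff_inf'_sdiff {α β : Type*} [LinearOrder β] [DecidableEq α]
    {A B : Finset α} (hA : A.Nonempty) (hB : B.Nonempty) (hAB : (A \ B).Nonempty) (f : α → β) :
    A.inf' hA f < B.inf' hB f ↔ (A \ B).inf' hAB f < B.inf' hB f := by
  simp only [Finset.inf'_lt_iff, Finset.mem_sdiff]
  constructor
  · rintro ⟨x, hxA, hlt⟩
    exact ⟨x, ⟨hxA, fun hxB => (Finset.inf'_le f hxB).not_gt hlt⟩, hlt⟩
  · rintro ⟨x, ⟨hxA, -⟩, hlt⟩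
    exact ⟨x, hxA, hlt⟩

namespace ProbabilityTheory

lemma expMeasure_Ioi {r : ℝ} (hr : 0 < r) (t : ℝ) :
    expMeasure r (Ioi t) = ENNReal.ofReal (exp (-(r * max t 0))) := by
  have := isProbabilityMeasure_expMeasure hr
  rw [← compl_Iic, prob_compl_eq_one_sub measurableSet_Iic, ← ofReal_cdf, cdf_expMeasure_eq hr]
  split_ifs with ht
  · have : exp (-(r * t)) ≤ 1 := exp_le_one_iff.mpr (by nlinarith)
    rw [max_eq_left ht, ← ENNReal.ofReal_one, ← ENNReal.ofReal_sub _ (by linarith)]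
    ring_nf
  · simp [max_eq_right (not_le.mp ht).le]

lemma expMeasure_Ici {r : ℝ} (hr : 0 < r) (t : ℝ) :
    expMeasure r (Ici t) = ENNReal.ofReal (exp (-(r * max t 0))) := by
  have hac : expMeasure r ≪ volume := withDensity_absolutelyContinuous _ _
  rw [← expMeasure_Ioi hr, measure_congr (hac.ae_eq Ioi_ae_eq_Ici)]

lemma expMeasure_prod_setOf_le {β γ : ℝ} (hβ : 0 < β) (hγ : 0 < γ) :
    (expMeasure β).prod (expMeasure γ) {p | p.1 ≤ p.2} = ENNReal.ofReal (β / (β + γ)) := by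
  have hdensity : ∀ x, exponentialPDF β x * ENNReal.ofReal (exp (-(γ * max x 0)))
      = ENNReal.ofReal (β / (β + γ)) * exponentialPDF (β + γ) x := by
    intro x
    rcases le_or_gt 0 x with hx | hx
    · rw [exponentialPDF_of_nonneg hx, exponentialPDF_of_nonneg hx, max_eq_left hx,
        ← ENNReal.ofReal_mul (by positivity), ← ENNReal.ofReal_mul (by positivity)]
      congr 1
      rw [mul_assoc, ← exp_add]
      field_simp
      ring_nf
    · rw [exponentialPDF_of_neg hx, exponentialPDF_of_neg hx, zero_mul, mul_zero]
  have hpdf (r : ℝ) : Measurable (exponentialPDF r) :=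
    (measurable_exponentialPDFReal r).ennreal_ofReal
  calc (expMeasure β).prod (expMeasure γ) {p | p.1 ≤ p.2}
      = ∫⁻ x, exponentialPDF β x * ENNReal.ofReal (exp (-(γ * max x 0))) := by
        have := isProbabilityMeasure_expMeasure hγ
        rw [Measure.prod_apply (measurableSet_le measurable_fst measurable_snd)]
        change ∫⁻ x, expMeasure γ (Ici x) ∂volume.withDensity (exponentialPDF β) = _
        simp_rw [expMeasure_Ici hγ]
        rw [lintegral_withDensity_eq_lintegral_mul _ (hpdf β) (by fun_prop)]
        rfl
    _ = ENNReal.ofReal (β / (β + γ)) := by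
        simp_rw [hdensity]
        rw [lintegral_const_mul _ (hpdf _), lintegral_exponentialPDF_eq_one (by positivity),
          mul_one]

variable {Ω ι : Type*} [MeasurableSpace Ω] {P : Measure Ω}

lemma iIndepFun.curry {κ 𝓧 : Type*} [MeasurableSpace 𝓧] {X : ι → κ → Ω → 𝓧}
    (hX : ∀ i j, Measurable (X i j)) (h : iIndepFun (fun p : ι × κ => X p.1 p.2) P) :
    iIndepFun (fun i ω j => X i j ω) P := by
  have := h.isProbabilityMeasure
  have hblock (i : ι) : Measurable fun ω j => X i j ω := measurable_pi_lambda _ (hX i)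
  have := fun i j => Measure.isProbabilityMeasure_map (μ := P) (hX i j).aemeasurable
  rw [iIndepFun_iff_map_fun_eq_infinitePi_map hblock]
  have hlaw := h.map_fun_eq_infinitePi_map fun p : ι × κ => hX p.1 p.2
  have hblock_law (i : ι) :
      P.map (fun ω j => X i j ω) = Measure.infinitePi fun j => P.map (X i j) :=
    (h.precomp (g := Prod.mk i) (Prod.mk_right_injective i)).map_fun_eq_infinitePi_map (hX i)
  calc P.map (fun ω i j => X i j ω)
      = (P.map fun ω p => X p.1 p.2 ω).map (MeasurableEquiv.curry ι κ 𝓧) := by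
        rw [Measure.map_map (MeasurableEquiv.measurable _)
          (measurable_pi_lambda (fun ω (p : ι × κ) => X p.1 p.2 ω) fun p => hX p.1 p.2)]
        rfl
    _ = Measure.infinitePi fun i => P.map fun ω j => X i j ω := by
        simp_rw [hlaw, hblock_law]
        exact Measure.infinitePi_map_curry (fun i j => P.map (X i j))

variable {Y : ι → Ω → ℝ} {r : ι → ℝ}

lemma iIndepFun.map_inf'_eq_expMeasure (hY : iIndepFun Y P) (hmeas : ∀ i, Measurable (Y i))
    (hlaw : ∀ i, P.map (Y i) = expMeasure (r i)) (hr : ∀ i, 0 < r i)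
    {S : Finset ι} (hS : S.Nonempty) :
    P.map (fun ω => S.inf' hS (Y · ω)) = expMeasure (∑ i ∈ S, r i) := by
  have := hY.isProbabilityMeasure
  have hmin : Measurable fun ω => S.inf' hS (Y · ω) :=
    Finset.measurable_inf' hS fun i _ => hmeas i
  have := Measure.isProbabilityMeasure_map (μ := P) hmin.aemeasurable
  refine Measure.ext_of_Ici _ _ fun t => ?_
  have hpre : (fun ω => S.inf' hS (Y · ω)) ⁻¹' Ici t = ⋂ i ∈ S, Y i ⁻¹' Ici t := by
    ext; simp [Finset.le_inf'_iff]
  rw [Measure.map_apply hmin measurableSet_Ici, hpre,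
    hY.meas_biInter fun i _ => ⟨Ici t, measurableSet_Ici, rfl⟩,
    expMeasure_Ici (Finset.sum_pos (fun i _ => hr i) hS)]
  calc ∏ i ∈ S, P (Y i ⁻¹' Ici t) = ∏ i ∈ S, ENNReal.ofReal (exp (-(r i * max t 0))) :=
        Finset.prod_congr rfl fun i _ => by
          rw [← Measure.map_apply (hmeas i) measurableSet_Ici, hlaw, expMeasure_Ici (hr i)]
    _ = _ := by
        rw [← ENNReal.ofReal_prod_of_nonneg fun _ _ => (exp_pos _).le, ← exp_sum,
          Finset.sum_mul, Finset.sum_neg_distrib]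

lemma iIndepFun.indepFun_inf'_inf' (hY : iIndepFun Y P) (hmeas : ∀ i, Measurable (Y i))
    {S T : Finset ι} (hS : S.Nonempty) (hT : T.Nonempty) (hST : Disjoint S T) :
    IndepFun (fun ω => S.inf' hS (Y · ω)) (fun ω => T.inf' hT (Y · ω)) P := by
  convert (hY.indepFun_finset S T hST hmeas).comp
    (Finset.measurable_inf' hS.attach fun i _ => measurable_pi_apply i)
    (Finset.measurable_inf' hT.attach fun i _ => measurable_pi_apply i) using 1 <;>
  exact funext fun ω => (Finset.inf'_attach _ _).symm

lemma iIndepFun.measure_inf'_le_inf' (hY : iIndepFun Y P) (hmeas : ∀ i, Measurable (Y i))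
    (hlaw : ∀ i, P.map (Y i) = expMeasure (r i)) (hr : ∀ i, 0 < r i)
    {S T : Finset ι} (hS : S.Nonempty) (hT : T.Nonempty) (hST : Disjoint S T) :
    P {ω | S.inf' hS (Y · ω) ≤ T.inf' hT (Y · ω)}
      = ENNReal.ofReal ((∑ i ∈ S, r i) / (∑ i ∈ S, r i + ∑ i ∈ T, r i)) := by
  have hminS := Finset.measurable_inf' hS fun i _ => hmeas i
  have hminT := Finset.measurable_inf' hT fun i _ => hmeas i
  have hle : MeasurableSet {p : ℝ × ℝ | p.1 ≤ p.2} :=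
    measurableSet_le measurable_fst measurable_snd
  have := hY.isProbabilityMeasure
  change P ((fun ω => (S.inf' hS (Y · ω), T.inf' hT (Y · ω))) ⁻¹' {p | p.1 ≤ p.2}) = _
  rw [← Measure.map_apply (hminS.prodMk hminT) hle,
    (indepFun_iff_map_prod_eq_prod_map_map hminS.aemeasurable hminT.aemeasurable).mp
      (hY.indepFun_inf'_inf' hmeas hS hT hST),
    hY.map_inf'_eq_expMeasure hmeas hlaw hr hS, hY.map_inf'_eq_expMeasure hmeas hlaw hr hT]
  exact expMeasure_prod_setOf_le (Finset.sum_pos (fun i _ => hr i) hS)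
    (Finset.sum_pos (fun i _ => hr i) hT)

lemma iIndepFun.measure_exists_notMem {κ β : Type*} [Fintype κ] [MeasurableSpace β]
    {Z : κ → Ω → β} (hZ : iIndepFun Z P) (hmeas : ∀ k, Measurable (Z k))
    {D : Set β} (hD : MeasurableSet D) {p : ℝ} (hp : 0 ≤ p)
    (hprob : ∀ k, P (Z k ⁻¹' D) = ENNReal.ofReal p) :
    P {ω | ∃ k, Z k ω ∉ D} = ENNReal.ofReal (1 - p ^ Fintype.card κ) := by
  have := hZ.isProbabilityMeasure
  have hevent : {ω | ∃ k, Z k ω ∉ D} = (⋂ k, Z k ⁻¹' D)ᶜ := by ext; simp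
  rw [hevent, prob_compl_eq_one_sub (.iInter fun k => hmeas k hD),
    hZ.meas_iInter fun k => ⟨D, hD, rfl⟩, Finset.prod_congr rfl fun k _ => hprob k,
    Finset.prod_const, Finset.card_univ, ← ENNReal.ofReal_pow hp, ← ENNReal.ofReal_one,
    ← ENNReal.ofReal_sub _ (pow_nonneg hp _)]

lemma iIndepFun.measure_exists_inf'_lt_inf' [DecidableEq ι] {κ : Type*} [Fintype κ]
    {X : ι → κ → Ω → ℝ} (hmeas : ∀ x k, Measurable (X x k))
    (hindep : iIndepFun (fun p : ι × κ => X p.1 p.2) P)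
    (hlaw : ∀ x k, P.map (X x k) = expMeasure (r x)) (hr : ∀ x, 0 < r x)
    {A B : Finset ι} (hA : A.Nonempty) (hB : B.Nonempty) (hAB : (A \ B).Nonempty) :
    P {ω | ∃ k, A.inf' hA (X · k ω) < B.inf' hB (X · k ω)}
      = ENNReal.ofReal
          (1 - ((∑ x ∈ B, r x) / (∑ x ∈ B, r x + ∑ x ∈ A \ B, r x)) ^ Fintype.card κ) := by
  have hcolumns : iIndepFun (fun k ω x => X x k ω) P :=
    (hindep.precomp Prod.swap_injective).curry fun k x => hmeas x k
  set D : Set (ι → ℝ) := {v | B.inf' hB v ≤ (A \ B).inf' hAB v}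
  have hD : MeasurableSet D := measurableSet_le
    (Finset.measurable_inf' hB fun x _ => measurable_pi_apply x)
    (Finset.measurable_inf' hAB fun x _ => measurable_pi_apply x)
  have hwitness : {ω | ∃ k, A.inf' hA (X · k ω) < B.inf' hB (X · k ω)}
      = {ω | ∃ k, (fun x => X x k ω) ∉ D} := by
    ext ω
    simp only [D, Set.mem_ofPred_eq, not_le, Finset.inf'_lt_inf'_iff_inf'_sdiff hA hB hAB]
  have hcolumn (k : κ) : P ((fun ω x => X x k ω) ⁻¹' D)
      = ENNReal.ofReal ((∑ x ∈ B, r x) / (∑ x ∈ B, r x + ∑ x ∈ A \ B, r x)) :=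
    (hindep.precomp (g := (·, k)) (Prod.mk_left_injective k)).measure_inf'_le_inf'
      (hmeas · k) (hlaw · k) hr hB hAB Finset.disjoint_sdiff
  have hnonneg (S : Finset ι) : 0 ≤ ∑ x ∈ S, r x := Finset.sum_nonneg fun x _ => (hr x).le
  rw [hwitness, hcolumns.measure_exists_notMem (fun k => measurable_pi_lambda _ (hmeas · k)) hD
    (div_nonneg (hnonneg B) (add_nonneg (hnonneg B) (hnonneg _))) hcolumn]

end ProbabilityTheory

theorem stmt_9_general
    {Ω : Type*} [MeasurableSpace Ω] (P : Measure Ω)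
    {ι : Type*} [DecidableEq ι]
    (m : ℕ) (hm : 1 ≤ m)
    (w : ι → ℝ) (hw : ∀ x, 0 < w x)
    (X : ι → Fin m → Ω → ℝ) (hmeas : ∀ x k, Measurable (X x k))
    (hindep : iIndepFun (fun p : ι × Fin m => X p.1 p.2) P)
    (hdist : ∀ x k, Measure.map (X x k) P = expMeasure (w x))
    (A B : Finset ι) (hA : A.Nonempty) (hB : B.Nonempty) :
    (A ⊆ B → ∀ (k : Fin m) (ω : Ω),
      B.inf' hB (fun x => X x k ω) ≤ A.inf' hA (fun x => X x k ω)) ∧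
    (¬ A ⊆ B →
      P {ω | ∃ k : Fin m,
          A.inf' hA (fun x => X x k ω) < B.inf' hB (fun x => X x k ω)}
        = ENNReal.ofReal (1 - ((∑ x ∈ B, w x) / ∑ x ∈ A ∪ B, w x) ^ m) ∧
      0 < P {ω | ∃ k : Fin m,
          A.inf' hA (fun x => X x k ω) < B.inf' hB (fun x => X x k ω)}) := by
  refine ⟨fun hAB k ω => Finset.inf'_mono _ hAB hA, fun hAB => ?_⟩
  have hC : (A \ B).Nonempty := Finset.sdiff_nonempty.mpr hAB
  have hwB : 0 < ∑ x ∈ B, w x := Finset.sum_pos (fun x _ => hw x) hB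
  have hwC : 0 < ∑ x ∈ A \ B, w x := Finset.sum_pos (fun x _ => hw x) hC
  have hsum : ∑ x ∈ A ∪ B, w x = ∑ x ∈ B, w x + ∑ x ∈ A \ B, w x := by
    rw [← Finset.sum_sdiff Finset.subset_union_right, Finset.union_sdiff_right, add_comm]
  have hprob := hindep.measure_exists_inf'_lt_inf' hmeas hdist hw hA hB hC
  rw [Fintype.card_fin, ← hsum] at hprob
  have hρ : (∑ x ∈ B, w x) / ∑ x ∈ A ∪ B, w x < 1 := by
    rw [hsum, div_lt_one (by positivity)]
    linarith
  refine ⟨hprob, hprob ▸ ENNReal.ofReal_pos.mpr (sub_pos.mpr (pow_lt_one₀ ?_ hρ (by omega)))⟩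
  rw [hsum]
  positivity

/-- For coordinated min-sketches of length `m` of nonempty subsets `A, B`
of a finite weighted set, built from independent variables `X x k ~ Exp(w x)`:
(i) if `A ⊆ B`, then `B_k ≤ A_k` for every position `k`, surely;
(ii) if `A ⊄ B`, then `P(∃ k, B_k > A_k) = 1 - (w(B)/w(A ∪ B))^m`, and in particular
this probability is strictly positive. -/
theorem stmt_9
    {Ω : Type*} [MeasurableSpace Ω] (P : Measure Ω) [IsProbabilityMeasure P]
    {ι : Type*} [Fintype ι] [DecidableEq ι]
    (m : ℕ) (hm : 1 ≤ m)
    (w : ι → ℝ) (hw : ∀ x, 0 < w x)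
    (X : ι → Fin m → Ω → ℝ) (hmeas : ∀ x k, Measurable (X x k))
    (hindep : iIndepFun (fun p : ι × Fin m => X p.1 p.2) P)
    (hdist : ∀ x k, Measure.map (X x k) P = expMeasure (w x))
    (A B : Finset ι) (hA : A.Nonempty) (hB : B.Nonempty) :
    (A ⊆ B → ∀ (k : Fin m) (ω : Ω),
      B.inf' hB (fun x => X x k ω) ≤ A.inf' hA (fun x => X x k ω)) ∧
    (¬ A ⊆ B →
      P {ω | ∃ k : Fin m,
          A.inf' hA (fun x => X x k ω) < B.inf' hB (fun x => X x k ω)}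
        = ENNReal.ofReal (1 - ((∑ x ∈ B, w x) / ∑ x ∈ A ∪ B, w x) ^ m) ∧
      0 < P {ω | ∃ k : Fin m,
          A.inf' hA (fun x => X x k ω) < B.inf' hB (fun x => X x k ω)}) :=
  stmt_9_general P m hm w hw X hmeas hindep hdist A B hA hB
end

section
/- Let Ω be a finite set with weights w(x) > 0 for x ∈ Ω, and for subsets S ⊆ Ω write w(S) = Σ_{x∈S} w(x). Let (X_x)_{x∈Ω} be independent random variables with X_x Exp(w(x))-distributed, and for a nonempty subset A ⊆ Ω write A* = min_{x∈A} X_x. Let A_1, …, A_d ⊆ Ω be nonempty subsets and let 1 ≤ r ≤ d. Then P( A_1* = A_2* = ⋯ = A_r* < min{A_{r+1}*, …, A_d*} ) = w( (A_1 ∩ ⋯ ∩ A_r) \ (A_{r+1} ∪ ⋯ ∪ A_d) ) / w( A_1 ∪ ⋯ ∪ A_d ), where for r = d the minimum over the empty collection is interpreted as +∞. -/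
open MeasureTheory ProbabilityTheory
open scoped Classical

/-!
Competing exponential clocks: with `X x ~ Exp(w x)` independent, `min_{y ∈ S} X y ~ Exp(w S)`,
and conditioning on `X x` shows that `x` rings strictly first in `U` with probability
`w x / w U`. These disjoint events have total probability one, so almost surely the minimum of
`X` over `U = A_1 ∪ ⋯ ∪ A_d` is attained at a single `x`. For such an outcome every `A_i*` equals
`X x` when `x ∈ A_i` and exceeds it otherwise, hence the sketch event occurs exactly when
`x ∈ (A_1 ∩ ⋯ ∩ A_r) \ (A_{r+1} ∪ ⋯ ∪ A_d)`.
-/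

open Real Set Finset

lemma expMeasure_Ioi {r t : ℝ} (hr : 0 < r) (ht : 0 ≤ t) :
    expMeasure r (Ioi t) = ENNReal.ofReal (exp (-(r * t))) := by
  have := isProbabilityMeasure_expMeasure hr
  have hexp : exp (-(r * t)) ≤ 1 := exp_le_one_iff.2 (neg_nonpos.2 (mul_nonneg hr.le ht))
  rw [← compl_Iic, prob_compl_eq_one_sub measurableSet_Iic, ← ofReal_cdf, cdf_expMeasure_eq hr,
    if_pos ht, ← ENNReal.ofReal_one, ← ENNReal.ofReal_sub _ (sub_nonneg.2 hexp), sub_sub_cancel]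

lemma ae_pos_expMeasure {r : ℝ} (hr : 0 < r) : ∀ᵐ t ∂expMeasure r, 0 < t := by
  have := isProbabilityMeasure_expMeasure hr
  rw [ae_iff]
  simp only [not_lt]
  change expMeasure r (Iic 0) = 0
  rw [← ofReal_cdf, cdf_expMeasure_eq hr]
  simp

lemma lintegral_exp_neg_mul_expMeasure {a b : ℝ} (ha : 0 < a) (hab : 0 < a + b) :
    ∫⁻ t, ENNReal.ofReal (exp (-(b * t))) ∂expMeasure a = ENNReal.ofReal (a / (a + b)) := by
  have hpdf : ∀ t, exponentialPDF a t * ENNReal.ofReal (exp (-(b * t)))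
      = ENNReal.ofReal (a / (a + b)) * exponentialPDF (a + b) t := by
    intro t
    rcases lt_or_ge t 0 with ht | ht
    · simp [exponentialPDF_of_neg ht]
    · rw [exponentialPDF_of_nonneg ht, exponentialPDF_of_nonneg ht,
        ← ENNReal.ofReal_mul (by positivity), ← ENNReal.ofReal_mul (by positivity),
        show -((a + b) * t) = -(a * t) + -(b * t) by ring, exp_add]
      congr 1
      field_simp
  change ∫⁻ t, _ ∂volume.withDensity (exponentialPDF a) = _
  have hmeas (r : ℝ) : Measurable (exponentialPDF r) :=
    (measurable_exponentialPDFReal r).ennreal_ofReal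
  rw [lintegral_withDensity_eq_lintegral_mul _ (hmeas a) (by fun_prop)]
  simp only [Pi.mul_apply, hpdf]
  rw [lintegral_const_mul _ (hmeas _), lintegral_exponentialPDF_eq_one hab, mul_one]

theorem ProbabilityTheory.IndepFun.measure_prodMk_mem_eq_lintegral {Ω β γ : Type*}
    [MeasurableSpace Ω] {P : Measure Ω} [IsFiniteMeasure P] [MeasurableSpace β]
    [MeasurableSpace γ] {f : Ω → β} {g : Ω → γ}
    (hfg : IndepFun f g P) (hf : Measurable f) (hg : Measurable g) {C : Set (β × γ)}
    (hC : MeasurableSet C) :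
    P {ω | (f ω, g ω) ∈ C} = ∫⁻ b, P.map g (Prod.mk b ⁻¹' C) ∂P.map f := by
  rw [← Measure.prod_apply hC, ← hfg.map_prod_eq_prod_map_map hf.aemeasurable hg.aemeasurable,
    Measure.map_apply (hf.prodMk hg) hC]
  rfl

section ExponentialRace

variable {Ω ι : Type*} [MeasurableSpace Ω] {P : Measure Ω}
  {w : ι → ℝ} {X : ι → Ω → ℝ}

lemma measure_forall_lt_of_iIndepFun_exp (hw : ∀ x, 0 < w x) (hmeas : ∀ x, Measurable (X x))
    (hindep : iIndepFun X P) (hdist : ∀ x, P.map (X x) = expMeasure (w x))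
    (S : Finset ι) {t : ℝ} (ht : 0 ≤ t) :
    P {ω | ∀ y ∈ S, t < X y ω} = ENNReal.ofReal (exp (-((∑ y ∈ S, w y) * t))) := by
  have hset : {ω | ∀ y ∈ S, t < X y ω} = ⋂ y ∈ S, X y ⁻¹' Ioi t := by
    ext ω; simp
  rw [hset, hindep.meas_biInter fun y _ => ⟨Ioi t, measurableSet_Ioi, rfl⟩]
  have hfactor (y : ι) : P (X y ⁻¹' Ioi t) = ENNReal.ofReal (exp (-(w y * t))) := by
    rw [← Measure.map_apply (hmeas y) measurableSet_Ioi, hdist y, expMeasure_Ioi (hw y) ht]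
  simp_rw [hfactor]
  rw [← ENNReal.ofReal_prod_of_nonneg fun y _ => (exp_pos _).le, ← exp_sum, Finset.sum_mul,
    ← Finset.sum_neg_distrib]

lemma measure_lt_forall_of_iIndepFun_exp (hw : ∀ x, 0 < w x) (hmeas : ∀ x, Measurable (X x))
    (hindep : iIndepFun X P) (hdist : ∀ x, P.map (X x) = expMeasure (w x))
    {x : ι} {S : Finset ι} (hxS : x ∉ S) :
    P {ω | ∀ y ∈ S, X x ω < X y ω} = ENNReal.ofReal (w x / (w x + ∑ y ∈ S, w y)) := by
  have := hindep.isProbabilityMeasure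
  set g : Ω → (S → ℝ) := fun ω y => X y ω
  have hg : Measurable g := measurable_pi_lambda _ fun y => hmeas y
  have hXg : IndepFun (X x) g P := by
    have := hindep.indepFun_finset {x} S (Finset.disjoint_singleton_left.2 hxS) hmeas
    exact this.comp (measurable_pi_apply ⟨x, Finset.mem_singleton_self x⟩) measurable_id
  set C : Set (ℝ × (S → ℝ)) := {p | ∀ y, p.1 < p.2 y}
  have hC : MeasurableSet C := by
    simp_rw [C, ofPred_forall]
    exact .iInter fun y =>
      measurableSet_lt measurable_fst ((measurable_pi_apply y).comp measurable_snd)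
  have hslice : ∀ᵐ t ∂P.map (X x), P.map g (Prod.mk t ⁻¹' C)
      = ENNReal.ofReal (exp (-((∑ y ∈ S, w y) * t))) := by
    rw [hdist x]
    filter_upwards [ae_pos_expMeasure (hw x)] with t ht
    have hmeasC : MeasurableSet (Prod.mk t ⁻¹' C) := measurable_prodMk_left hC
    rw [Measure.map_apply hg hmeasC,
      ← measure_forall_lt_of_iIndepFun_exp hw hmeas hindep hdist S ht.le]
    congr 1
    ext ω; simp [g, C]
  have hev : {ω | ∀ y ∈ S, X x ω < X y ω} = {ω | (X x ω, g ω) ∈ C} := by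
    ext ω; simp [g, C]
  rw [hev, hXg.measure_prodMk_mem_eq_lintegral (hmeas x) hg hC, lintegral_congr_ae hslice,
    hdist x, lintegral_exp_neg_mul_expMeasure (hw x)
      (add_pos_of_pos_of_nonneg (hw x) (sum_nonneg fun y _ => (hw y).le))]

lemma measurableSet_forall_lt (hmeas : ∀ x, Measurable (X x)) (x : ι) (S : Finset ι) :
    MeasurableSet {ω | ∀ y ∈ S, X x ω < X y ω} := by
  rw [show {ω | ∀ y ∈ S, X x ω < X y ω} = ⋂ y ∈ S, {ω | X x ω < X y ω} by ext; simp]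
  exact S.measurableSet_biInter fun y _ => measurableSet_lt (hmeas x) (hmeas y)

lemma measure_biUnion_forall_erase_lt_of_iIndepFun_exp (hw : ∀ x, 0 < w x)
    (hmeas : ∀ x, Measurable (X x)) (hindep : iIndepFun X P)
    (hdist : ∀ x, P.map (X x) = expMeasure (w x)) {U J : Finset ι} (hJU : J ⊆ U) :
    P (⋃ x ∈ J, {ω | ∀ y ∈ U.erase x, X x ω < X y ω})
      = ENNReal.ofReal ((∑ x ∈ J, w x) / ∑ y ∈ U, w y) := by
  have hdisj : (J : Set ι).PairwiseDisjoint fun x => {ω | ∀ y ∈ U.erase x, X x ω < X y ω} := by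
    intro x hx x' hx' hne
    exact Set.disjoint_left.2 fun ω h h' =>
      lt_asymm (h x' (mem_erase.2 ⟨hne.symm, hJU hx'⟩)) (h' x (mem_erase.2 ⟨hne, hJU hx⟩))
  rw [measure_biUnion_finset hdisj fun x _ => measurableSet_forall_lt hmeas x _, Finset.sum_div,
    ENNReal.ofReal_sum_of_nonneg fun x _ => div_nonneg (hw x).le (sum_nonneg fun y _ => (hw y).le)]
  refine Finset.sum_congr rfl fun x hx => ?_
  rw [measure_lt_forall_of_iIndepFun_exp hw hmeas hindep hdist (notMem_erase x U),
    add_sum_erase _ _ (hJU hx)]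

lemma measure_compl_biUnion_forall_erase_lt_of_iIndepFun_exp (hw : ∀ x, 0 < w x)
    (hmeas : ∀ x, Measurable (X x)) (hindep : iIndepFun X P)
    (hdist : ∀ x, P.map (X x) = expMeasure (w x)) {U : Finset ι} (hU : U.Nonempty) :
    P (⋃ x ∈ U, {ω | ∀ y ∈ U.erase x, X x ω < X y ω})ᶜ = 0 := by
  have := hindep.isProbabilityMeasure
  have hwU : ∑ x ∈ U, w x ≠ 0 := (sum_pos (fun x _ => hw x) hU).ne'
  have hmeasU := U.measurableSet_biUnion fun x _ => measurableSet_forall_lt hmeas x (U.erase x)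
  rw [prob_compl_eq_zero_iff hmeasU,
    measure_biUnion_forall_erase_lt_of_iIndepFun_exp hw hmeas hindep hdist subset_rfl,
    div_self hwU, ENNReal.ofReal_one]

end ExponentialRace

section StrictMin

variable {ι α : Type*} [LinearOrder α] {U s : Finset ι} {f : ι → α} {x : ι}

lemma le_inf'_of_forall_erase_lt (hsU : s ⊆ U) (hs : s.Nonempty)
    (hx : ∀ y ∈ U.erase x, f x < f y) : f x ≤ s.inf' hs f := by
  refine le_inf' _ _ fun y hy => ?_
  rcases eq_or_ne y x with rfl | hne
  · exact le_rfl
  · exact (hx y (mem_erase.2 ⟨hne, hsU hy⟩)).le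

lemma inf'_eq_iff_mem_of_forall_erase_lt (hsU : s ⊆ U) (hs : s.Nonempty)
    (hx : ∀ y ∈ U.erase x, f x < f y) : s.inf' hs f = f x ↔ x ∈ s := by
  refine ⟨fun h => ?_, fun hxs =>
    le_antisymm (inf'_le _ hxs) (le_inf'_of_forall_erase_lt hsU hs hx)⟩
  by_contra hxs
  have : f x < s.inf' hs f :=
    (lt_inf'_iff _).2 fun y hy => hx y (mem_erase.2 ⟨fun h => hxs (h ▸ hy), hsU hy⟩)
  exact this.ne' h

lemma inf'_eq_and_lt_iff_mem_and_notMem {d r : ℕ} {A : Fin d → Finset ι}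
    (hA : ∀ i, (A i).Nonempty) (hAU : ∀ i, A i ⊆ U) {i₀ : Fin d} (hi₀ : i₀.val < r)
    (hxA : ∃ k, x ∈ A k) (hx : ∀ y ∈ U.erase x, f x < f y) :
    ((∀ i : Fin d, i.val < r → (A i).inf' (hA i) f = (A i₀).inf' (hA i₀) f) ∧
      (∀ j : Fin d, r ≤ j.val → (A i₀).inf' (hA i₀) f < (A j).inf' (hA j) f)) ↔
    (∀ i : Fin d, i.val < r → x ∈ A i) ∧ (∀ j : Fin d, r ≤ j.val → x ∉ A j) := by
  have hmem (i : Fin d) : (A i).inf' (hA i) f = f x ↔ x ∈ A i :=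
    inf'_eq_iff_mem_of_forall_erase_lt (hAU i) (hA i) hx
  have hle (i : Fin d) : f x ≤ (A i).inf' (hA i) f :=
    le_inf'_of_forall_erase_lt (hAU i) (hA i) hx
  constructor
  · rintro ⟨heq, hlt⟩
    obtain ⟨k, hxk⟩ := hxA
    have hk : k.val < r := by
      by_contra hk
      exact (hlt k (not_lt.1 hk)).not_ge (((hmem k).2 hxk).symm ▸ hle i₀)
    have hi₀x : (A i₀).inf' (hA i₀) f = f x := (heq k hk).symm.trans ((hmem k).2 hxk)
    exact ⟨fun i hi => (hmem i).1 ((heq i hi).trans hi₀x),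
      fun j hj hxj => (hlt j hj).ne (hi₀x.trans ((hmem j).2 hxj).symm)⟩
  · rintro ⟨hin, hout⟩
    have hi₀x := (hmem i₀).2 (hin i₀ hi₀)
    exact ⟨fun i hi => ((hmem i).2 (hin i hi)).trans hi₀x.symm,
      fun j hj => hi₀x ▸ (hle j).lt_of_ne fun h => hout j hj ((hmem j).1 h.symm)⟩

end StrictMin

theorem stmt_10_general
    {Ω : Type*} [MeasurableSpace Ω] (P : Measure Ω)
    {ι : Type*} [Fintype ι]
    (w : ι → ℝ) (hw : ∀ x, 0 < w x)
    (X : ι → Ω → ℝ) (hmeas : ∀ x, Measurable (X x))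
    (hindep : iIndepFun X P)
    (hdist : ∀ x, Measure.map (X x) P = expMeasure (w x))
    (d : ℕ) (r : ℕ) (hr1 : 1 ≤ r) (hrd : r ≤ d)
    (A : Fin d → Finset ι) (hA : ∀ i, (A i).Nonempty) :
    P {ω | (∀ i : Fin d, i.val < r →
              (A i).inf' (hA i) (fun x => X x ω)
                = (A (⟨0, lt_of_lt_of_le hr1 hrd⟩ : Fin d)).inf'
                    (hA _) (fun x => X x ω)) ∧
           (∀ j : Fin d, r ≤ j.val →
              (A (⟨0, lt_of_lt_of_le hr1 hrd⟩ : Fin d)).inf'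
                  (hA _) (fun x => X x ω)
                < (A j).inf' (hA j) (fun x => X x ω))}
      = ENNReal.ofReal
          ((∑ x : ι, if (∀ i : Fin d, i.val < r → x ∈ A i) ∧
                        (∀ j : Fin d, r ≤ j.val → x ∉ A j) then w x else 0)
            / ∑ x : ι, if ∃ i : Fin d, x ∈ A i then w x else 0) := by
  set i₀ : Fin d := ⟨0, lt_of_lt_of_le hr1 hrd⟩
  set U := univ.filter fun x => ∃ i : Fin d, x ∈ A i
  set I := univ.filter fun x =>
    (∀ i : Fin d, i.val < r → x ∈ A i) ∧ (∀ j : Fin d, r ≤ j.val → x ∉ A j)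
  set E : ι → Set Ω := fun x => {ω | ∀ y ∈ U.erase x, X x ω < X y ω}
  have hAU (i : Fin d) : A i ⊆ U := fun x hx => mem_filter.2 ⟨mem_univ x, i, hx⟩
  have hIU : I ⊆ U := fun x hx => hAU i₀ ((mem_filter.1 hx).2.1 i₀ hr1)
  have hE_ae : P (⋃ x ∈ U, E x)ᶜ = 0 :=
    measure_compl_biUnion_forall_erase_lt_of_iIndepFun_exp hw hmeas hindep hdist
      ((hA i₀).mono (hAU i₀))
  rw [← measure_inter_conull hE_ae, ← sum_filter, ← sum_filter]
  convert measure_biUnion_forall_erase_lt_of_iIndepFun_exp hw hmeas hindep hdist hIU using 2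
  ext ω
  simp only [E, mem_inter_iff, mem_iUnion, mem_ofPred_eq, exists_prop]
  constructor
  · rintro ⟨hevent, x, hxU, hx⟩
    have hxI := (inf'_eq_and_lt_iff_mem_and_notMem hA hAU hr1 (mem_filter.1 hxU).2 hx).1 hevent
    exact ⟨x, mem_filter.2 ⟨mem_univ x, hxI⟩, hx⟩
  · rintro ⟨x, hxI, hx⟩
    have hxU := mem_filter.1 (hIU hxI)
    exact ⟨(inf'_eq_and_lt_iff_mem_and_notMem hA hAU hr1 hxU.2 hx).2 (mem_filter.1 hxI).2,
      x, hIU hxI, hx⟩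

/-- For coordinated min-sketch cells `A_i* = min_{x ∈ A_i} X x` of nonempty
subsets `A_1, …, A_d` of a finite weighted set (with independent `X x ~ Exp(w x)`), and
`1 ≤ r ≤ d`,
`P(A_1* = ⋯ = A_r* < min {A_{r+1}*, …, A_d*})
  = w((A_1 ∩ ⋯ ∩ A_r) \ (A_{r+1} ∪ ⋯ ∪ A_d)) / w(A_1 ∪ ⋯ ∪ A_d)`,
where for `r = d` the minimum over the empty collection is `+∞` (the condition is vacuous). -/
theorem stmt_10
    {Ω : Type*} [MeasurableSpace Ω] (P : Measure Ω) [IsProbabilityMeasure P]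
    {ι : Type*} [Fintype ι]
    (w : ι → ℝ) (hw : ∀ x, 0 < w x)
    (X : ι → Ω → ℝ) (hmeas : ∀ x, Measurable (X x))
    (hindep : iIndepFun X P)
    (hdist : ∀ x, Measure.map (X x) P = expMeasure (w x))
    (d : ℕ) (r : ℕ) (hr1 : 1 ≤ r) (hrd : r ≤ d)
    (A : Fin d → Finset ι) (hA : ∀ i, (A i).Nonempty) :
    P {ω | (∀ i : Fin d, i.val < r →
              (A i).inf' (hA i) (fun x => X x ω)
                = (A (⟨0, lt_of_lt_of_le hr1 hrd⟩ : Fin d)).inf'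
                    (hA _) (fun x => X x ω)) ∧
           (∀ j : Fin d, r ≤ j.val →
              (A (⟨0, lt_of_lt_of_le hr1 hrd⟩ : Fin d)).inf'
                  (hA _) (fun x => X x ω)
                < (A j).inf' (hA j) (fun x => X x ω))}
      = ENNReal.ofReal
          ((∑ x : ι, if (∀ i : Fin d, i.val < r → x ∈ A i) ∧
                        (∀ j : Fin d, r ≤ j.val → x ∉ A j) then w x else 0)
            / ∑ x : ι, if ∃ i : Fin d, x ∈ A i then w x else 0) :=
  stmt_10_general P w hw X hmeas hindep hdist d r hr1 hrd A hA
end
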